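/- Let k be a field, (P, ⪯) a totally ordered set, and K' = ⊕_{a∈A} k_{J_a} a direct sum of interval modules in which every interval J_a is unbounded above. Let g : N → K' be a morphism of persistence modules such that for every p ∈ P there exists p' ⪰ p with g(p') : N(p') → K'(p') surjective. Then g(p) is surjective for every p ∈ P. -/

import Mathlib

/-!
An interval `J` that is unbounded above contains every `p' ⪰ p` once it contains `p`, so each
structure map `k_J(p') → k_J(p)` is surjective, and hence so is `K'(p') → K'(p)`. Surjectivity
of `g(p')` then descends to `g(p)` through the naturality square
`g(p) ∘ ω^p_{p'} = ω^p_{p'} ∘ g(p')`.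
-/

set_option linter.unusedSectionVars false

open Classical

universe u v w w'

section Persistence

variable (k : Type u) [Field k] (P : Type v) [LinearOrder P]

/-- A persistence module over the poset `P`: a functor assigning to each `p : P` a
`k`-vector space and to each pair `p ⪰ p'` a linear map `M p → M p'`. -/
structure PersistenceModule where
  carrier : P → Type w
  [acg : ∀ p, AddCommGroup (carrier p)]
  [mod : ∀ p, Module k (carrier p)]
  map : ∀ {p p' : P}, p' ≤ p → (carrier p →ₗ[k] carrier p')
  map_id : ∀ p : P, map (le_refl p) = LinearMap.id
  map_comp : ∀ {p p' p'' : P} (h1 : p'' ≤ p') (h2 : p' ≤ p),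
      (map h1).comp (map h2) = map (h1.trans h2)

attribute [instance] PersistenceModule.acg PersistenceModule.mod

variable {k P}

/-- A morphism of persistence modules. -/
structure PersistenceHom (M : PersistenceModule.{u,v,w} k P)
    (N : PersistenceModule.{u,v,w'} k P) where
  f : ∀ p : P, M.carrier p →ₗ[k] N.carrier p
  comm : ∀ {p p' : P} (h : p' ≤ p), (N.map h).comp (f p) = (f p').comp (M.map h)

/-- An isomorphism of persistence modules. -/
structure PersistenceIso (M : PersistenceModule.{u,v,w} k P)
    (N : PersistenceModule.{u,v,w'} k P) where
  e : ∀ p : P, M.carrier p ≃ₗ[k] N.carrier p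
  comm : ∀ {p p' : P} (h : p' ≤ p) (x : M.carrier p), e p' (M.map h x) = N.map h (e p x)

variable (P)

/-- An interval of `P`: a nonempty convex subset. -/
def IsInterval (I : Set P) : Prop :=
  I.Nonempty ∧ ∀ ⦃a b c : P⦄, a ∈ I → c ∈ I → a ≤ b → b ≤ c → b ∈ I

variable (k)

/-- The fibre of the interval module `k_I` at `p`: a copy of `k` if `p ∈ I`, zero otherwise. -/
noncomputable def intervalCarrier (I : Set P) (p : P) : Submodule k k :=
  if p ∈ I then ⊤ else ⊥

theorem intervalCarrier_eq_zero {I : Set P} {p : P} (hp : p ∉ I)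
    (x : intervalCarrier k P I p) : (x : k) = 0 := by
  have hx := x.2
  simp only [intervalCarrier, if_neg hp, Submodule.mem_bot] at hx
  exact hx

/-- The structure maps of the interval module. -/
noncomputable def intervalMapAux (I : Set P) (p p' : P) :
    intervalCarrier k P I p →ₗ[k] intervalCarrier k P I p' where
  toFun x := ⟨if p' ∈ I then (x : k) else 0, by
    split_ifs with h
    · simp [intervalCarrier, h]
    · exact (intervalCarrier k P I p').zero_mem⟩
  map_add' x y := by
    apply Subtype.ext
    by_cases h : p' ∈ I <;> simp [h]
  map_smul' c x := by
    apply Subtype.ext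
    by_cases h : p' ∈ I <;> simp [h]

/-- The interval module `k_I` associated to an interval `I ⊆ P`. -/
noncomputable def intervalModule (I : Set P) (hI : IsInterval P I) :
    PersistenceModule.{u,v,u} k P where
  carrier p := intervalCarrier k P I p
  map {p p'} _ := intervalMapAux k P I p p'
  map_id p := by
    ext x
    by_cases h : p ∈ I
    · simp [intervalMapAux, h]
    · have hx := intervalCarrier_eq_zero k P h x
      simp [intervalMapAux, h, hx]
  map_comp {p p' p''} h1 h2 := by
    ext x
    by_cases h'' : p'' ∈ I
    · by_cases h' : p' ∈ I
      · simp [intervalMapAux, h', h'']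
      · have hp : p ∉ I := fun hp => h' (hI.2 h'' hp h1 h2)
        have hx := intervalCarrier_eq_zero k P hp x
        simp [intervalMapAux, h', h'', hx]
    · simp [intervalMapAux, h'']

/-- The pointwise direct sum of a family of persistence modules. -/
noncomputable def directSumPM {A : Type w'} (Ms : A → PersistenceModule.{u,v,w} k P) :
    PersistenceModule k P where
  carrier p := Π₀ a, (Ms a).carrier p
  map h := DFinsupp.mapRange.linearMap (fun a => (Ms a).map h)
  map_id p := by
    have h : (fun a => (Ms a).map (le_refl p)) = fun a => LinearMap.id := by
      funext a; exact (Ms a).map_id p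
    rw [h, DFinsupp.mapRange.linearMap_id]
  map_comp h1 h2 := by
    rw [← DFinsupp.mapRange.linearMap_comp]
    congr 1
    funext a
    exact (Ms a).map_comp h1 h2

end Persistence

/-- An interval is bounded above if some point of `P` outside it lies strictly above a point
of it. -/
def BddAboveInterval (P : Type v) [LinearOrder P] (I : Set P) : Prop :=
  ∃ p ∉ I, ∃ p' ∈ I, p' < p

namespace PersistenceHom

variable {k : Type u} [Field k] {P : Type v} [LinearOrder P]
  {M : PersistenceModule.{u,v,w} k P} {N : PersistenceModule.{u,v,w'} k P}

theorem surjective_of_le (g : PersistenceHom M N) {p p' : P} (h : p ≤ p')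
    (hN : Function.Surjective (N.map h)) (hg : Function.Surjective (g.f p')) :
    Function.Surjective (g.f p) := by
  have hcomp : ⇑(g.f p) ∘ ⇑(M.map h) = ⇑(N.map h) ∘ ⇑(g.f p') :=
    congrArg DFunLike.coe (g.comm h).symm
  exact Function.Surjective.of_comp (g := M.map h) (hcomp ▸ hN.comp hg)

end PersistenceHom

section

variable {k : Type u} [Field k] {P : Type v} [LinearOrder P]

theorem directSumPM_map_surjective {A : Type w'} (Ms : A → PersistenceModule.{u,v,w} k P)
    {p p' : P} (h : p' ≤ p) (hMs : ∀ a, Function.Surjective ((Ms a).map h)) :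
    Function.Surjective ((directSumPM k P Ms).map h) :=
  (DFinsupp.mapRange_surjective _ fun a => map_zero ((Ms a).map h)).2 hMs

theorem intervalModule_map_surjective {I : Set P} (hI : IsInterval P I) {p p' : P}
    (h : p' ≤ p) (hmem : p' ∈ I → p ∈ I) :
    Function.Surjective ((intervalModule k P I hI).map h) := by
  change Function.Surjective (intervalMapAux k P I p p')
  intro x
  refine ⟨intervalMapAux k P I p' p x, Subtype.ext ?_⟩
  by_cases hp' : p' ∈ I
  · simp [intervalMapAux, hp', hmem hp']
  · simp [intervalMapAux, hp', intervalCarrier_eq_zero k P hp' x]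

theorem mem_of_not_bddAboveInterval {I : Set P} (hI : ¬ BddAboveInterval P I) {p p' : P}
    (hp : p ∈ I) (h : p ≤ p') : p' ∈ I := by
  by_contra hp'
  exact hI ⟨p', hp', p, hp, h.lt_of_ne (ne_of_mem_of_not_mem hp hp')⟩

end

/-- let `K' = ⊕_{a} k_{J_a}` with every `J_a` unbounded above, and let
`g : N → K'` be a morphism of persistence modules such that for every `p` there is some
`p' ⪰ p` with `g(p')` surjective.  Then `g(p)` is surjective for every `p`. -/
theorem statement14 (k : Type u) [Field k] (P : Type v) [LinearOrder P]
    {A : Type w'} (J : A → Set P) (hJ : ∀ a, IsInterval P (J a))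
    (hub : ∀ a, ¬ BddAboveInterval P (J a))
    (N : PersistenceModule.{u,v,w} k P)
    (g : PersistenceHom N (directSumPM k P (fun a => intervalModule k P (J a) (hJ a))))
    (hsurj : ∀ p : P, ∃ p', p ≤ p' ∧ Function.Surjective (g.f p')) :
    ∀ p : P, Function.Surjective (g.f p) := by
  intro p
  obtain ⟨p', hpp', hg⟩ := hsurj p
  have hK' : Function.Surjective
      ((directSumPM k P fun a => intervalModule k P (J a) (hJ a)).map hpp') :=
    directSumPM_map_surjective _ hpp' fun a => intervalModule_map_surjective (hJ a) hpp'
      fun hp => mem_of_not_bddAboveInterval (hub a) hp hpp'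
  exact g.surjective_of_le hpp' hK' hg
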